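/- arXiv:0908.0447 — 2 statements merged into one kernel-verified Lean document; each statement's English description precedes it below -/
import Mathlib

section
/- Let ρ be the signed measure supported on equally spaced nodes s_j = a + (j − 1/2)h, h = (b−a)/n, j = 1,...,n, defined by ∫ p dρ = p(0) for all polynomials p of degree ≤ n−1 (so ρ({s_j}) equals the value at 0 of the j-th Lagrange basis polynomial). Then the total variation satisfies ∫|dρ| ≤ (2eb/(b−a))^{n−1}. -/
/-!
With equally spaced nodes `|s_j - s_i| = |j - i| h` and `0 < s_i ≤ b`, so the `j`-th mass is at
most `(b/h)^(n-1) / (j! (n-1-j)!) = (b/h)^(n-1) binom(n-1, j) / (n-1)!`. Summing over `j` gives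
`(2b/h)^(n-1) / (n-1)!`; with `h = (b-a)/n`, the bound `n^(n-1) ≤ e^(n-1) (n-1)!` (telescoped
from `(1 + 1/k)^k ≤ e`) finishes the estimate.
-/

open Finset Nat

theorem succ_pow_le_exp_one_pow_mul_factorial (m : ℕ) :
    ((m : ℝ) + 1) ^ m ≤ Real.exp 1 ^ m * m ! := by
  induction m with
  | zero => simp
  | succ k ih =>
    set x : ℝ := ((k + 1 : ℕ) : ℝ) with hx
    have hx0 : x ≠ 0 := by positivity
    calc (x + 1) ^ (k + 1) = (1 + x⁻¹) ^ (k + 1) * (x * x ^ k) := by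
          rw [← pow_succ' x k, ← mul_pow, add_mul, inv_mul_cancel₀ hx0, one_mul, add_comm]
      _ ≤ Real.exp 1 * (x * (Real.exp 1 ^ k * k !)) := by
          gcongr
          · exact Real.one_add_inv_pow_le_exp
          · rwa [hx, Nat.cast_succ]
      _ = Real.exp 1 ^ (k + 1) * (k + 1)! := by rw [hx, factorial_succ]; push_cast; ring

theorem prod_range_erase_abs_sub (n j : ℕ) (hj : j < n) :
    ∏ i ∈ (range n).erase j, |(j : ℝ) - i| = j ! * (n - 1 - j)! := by
  have hsplit : (range n).erase j = range j ∪ Ico (j + 1) n := by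
    ext i; simp only [mem_erase, mem_range, mem_union, mem_Ico]; omega
  have hdisj : Disjoint (range j) (Ico (j + 1) n) := by
    simp only [disjoint_left, mem_range, mem_Ico]; omega
  have hbelow : ∏ i ∈ range j, |(j : ℝ) - i| = j ! := by
    rw [← prod_range_reflect, ← prod_range_add_one_eq_factorial, Nat.cast_prod]
    refine prod_congr rfl fun i hi => ?_
    rw [mem_range] at hi
    rw [Nat.cast_sub (by omega), Nat.cast_sub (by omega), abs_of_nonneg (by push_cast; linarith)]
    push_cast; ring
  have habove : ∏ i ∈ Ico (j + 1) n, |(j : ℝ) - i| = (n - 1 - j)! := by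
    rw [prod_Ico_eq_prod_range, show n - (j + 1) = n - 1 - j by omega,
      ← prod_range_add_one_eq_factorial, Nat.cast_prod]
    refine prod_congr rfl fun i _ => ?_
    rw [abs_sub_comm, abs_of_nonneg (by push_cast; linarith)]
    push_cast; ring
  rw [hsplit, prod_union hdisj, hbelow, habove]

theorem Fin.prod_erase_abs_sub {n : ℕ} (j : Fin n) :
    ∏ i ∈ univ.erase j, |(j : ℝ) - i| = j ! * (n - 1 - j)! := by
  rw [← prod_range_erase_abs_sub n j j.isLt, ← Nat.Iio_eq_range, ← Fin.map_valEmbedding_univ,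
    ← Fin.valEmbedding_apply, ← map_erase, prod_map]

theorem abs_prod_erase_div_sub_le {n : ℕ} {s : Fin n → ℝ} {b h : ℝ} (hh : 0 < h)
    (hsb : ∀ i, |s i| ≤ b) (hs : ∀ i j, s j - s i = ((j : ℝ) - i) * h) (j : Fin n) :
    |∏ i ∈ univ.erase j, s i / (s j - s i)| ≤ (b / h) ^ (n - 1) / (j ! * (n - 1 - j)!) := by
  have hcard : #(univ.erase j) = n - 1 := by simp
  have hnum : ∏ i ∈ univ.erase j, |s i| ≤ b ^ (n - 1) := by
    rw [← hcard, ← prod_const]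
    exact prod_le_prod (fun i _ => abs_nonneg _) fun i _ => hsb i
  have hden : ∏ i ∈ univ.erase j, |s j - s i| = h ^ (n - 1) * (j ! * (n - 1 - j)!) := by
    simp_rw [hs, abs_mul, abs_of_pos hh, prod_mul_distrib, prod_const, hcard,
      Fin.prod_erase_abs_sub, mul_comm]
  simp_rw [abs_prod, abs_div]
  rw [prod_div_distrib, hden, div_pow, div_div]
  gcongr

theorem Fin.sum_inv_factorial_mul_factorial (m : ℕ) :
    ∑ j : Fin (m + 1), ((j ! : ℝ) * (m - j)!)⁻¹ = 2 ^ m / m ! := by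
  have hcast : ((2 ^ m : ℕ) : ℝ) = 2 ^ m := by push_cast; rfl
  rw [Fin.sum_univ_eq_sum_range (fun j => ((j ! : ℝ) * (m - j)!)⁻¹), ← hcast,
    ← Nat.sum_range_choose, Nat.cast_sum, sum_div]
  refine sum_congr rfl fun j hj => ?_
  rw [Nat.cast_choose ℝ (Nat.lt_succ_iff.mp (mem_range.mp hj))]
  field_simp

theorem stmt4_general (n : ℕ) (a b : ℝ) (ha : 0 < a) (hab : a < b)
    (h : ℝ) (hh : h = (b - a) / n)
    (s : Fin n → ℝ) (hsdef : ∀ j, s j = a + ((j : ℝ) + 1 / 2) * h)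
    (w : Fin n → ℝ)
    (hwdef : ∀ j, w j =
      (-1 : ℝ) ^ (n - 1) * ∏ i ∈ Finset.univ.erase j, s i / (s j - s i)) :
    ∑ j, |w j| ≤ (2 * Real.exp 1 * b / (b - a)) ^ (n - 1) := by
  obtain _ | m := n
  · simp
  have hba : 0 < b - a := by linarith
  have hh0 : 0 < h := by rw [hh]; positivity
  have hb : b = a + (m + 1) * h := by rw [hh]; push_cast; field_simp; ring
  have hsb : ∀ i, |s i| ≤ b := fun i => by
    have hi : (i : ℝ) ≤ m := by exact_mod_cast Nat.lt_succ_iff.mp i.isLt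
    rw [abs_of_pos (by rw [hsdef]; positivity), hsdef, hb]
    nlinarith
  have hs : ∀ i j, s j - s i = ((j : ℝ) - i) * h := fun i j => by rw [hsdef, hsdef]; ring
  calc ∑ j, |w j| = ∑ j, |∏ i ∈ univ.erase j, s i / (s j - s i)| := by simp [hwdef, abs_mul]
    _ ≤ ∑ j : Fin (m + 1), (b / h) ^ m / (j ! * (m - j)!) :=
        sum_le_sum fun j _ => by simpa using abs_prod_erase_div_sub_le hh0 hsb hs j
    _ = (b / h) ^ m * (2 ^ m / m !) := by
        simp_rw [div_eq_mul_inv _ ((_ : ℝ) * _), ← mul_sum, Fin.sum_inv_factorial_mul_factorial]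
    _ = (2 * b / (b - a)) ^ m * (((m : ℝ) + 1) ^ m / m !) := by
        have hbh : b / h = 2 * b / (b - a) * (m + 1) / 2 := by
          rw [hh]; push_cast; field_simp
        rw [hbh, div_pow, mul_pow]
        field_simp
    _ ≤ (2 * b / (b - a)) ^ m * Real.exp 1 ^ m :=
        mul_le_mul_of_nonneg_left
          (div_le_of_le_mul₀ (by positivity) (by positivity)
            (succ_pow_le_exp_one_pow_mul_factorial m))
          (pow_nonneg (div_nonneg (by linarith) hba.le) m)
    _ = (2 * Real.exp 1 * b / (b - a)) ^ m := by rw [← mul_pow]; congr 1; ring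

/-- Total variation bound for the interpolation functional with equally spaced nodes
`s_j = a + (j - 1/2)h`, `h = (b-a)/n`: the masses are
`ρ({s_j}) = (-1)^{n-1} ∏_{i≠j} s_i/(s_j - s_i)` and their absolute values sum to at most
`(2eb/(b-a))^{n-1}`. -/
theorem stmt4 (n : ℕ) (hn : 0 < n) (a b : ℝ) (ha : 0 < a) (hab : a < b)
    (h : ℝ) (hh : h = (b - a) / n)
    (s : Fin n → ℝ) (hsdef : ∀ j, s j = a + ((j : ℝ) + 1 / 2) * h)
    (w : Fin n → ℝ)
    (hwdef : ∀ j, w j =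
      (-1 : ℝ) ^ (n - 1) * ∏ i ∈ Finset.univ.erase j, s i / (s j - s i)) :
    ∑ j, |w j| ≤ (2 * Real.exp 1 * b / (b - a)) ^ (n - 1) :=
  stmt4_general n a b ha hab h hh s hsdef w hwdef
end

section
/- For each k ≥ 0 there exist signs ε_1, ..., ε_{2^k} ∈ {−1, +1} such that the trigonometric polynomial Q_k(t) = ∑_{n=1}^{2^k} ε_n cos(nt) satisfies sup_{t∈T} |Q_k(t)| ≤ 2^{(k+1)/2}. -/
/-!
With `z = e^{it}`, the sum is `Re (z P_k(z))`, where `P_k` is the Rudin–Shapiro polynomial with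
coefficients `ε_1, …, ε_{2^k}`. The recursion `P_{k+1} = P_k + z^{2^k} Q_k`,
`Q_{k+1} = P_k - z^{2^k} Q_k` and the parallelogram law give `|P_k|² + |Q_k|² = 2^{k+1}` on the
unit circle, so `|Re (z P_k(z))| ≤ |P_k(z)| ≤ 2^{(k+1)/2}`.
-/

open Complex Finset

noncomputable def coeffPoly (c : ℕ → ℝ) (N : ℕ) (z : ℂ) : ℂ :=
  ∑ n ∈ range N, (c n : ℂ) * z ^ n

theorem coeffPoly_add_of_eq {c c' d : ℕ → ℝ} {m : ℕ} (N : ℕ) (hc : ∀ n < m, c' n = c n)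
    (hd : ∀ n, c' (m + n) = d n) (z : ℂ) :
    coeffPoly c' (m + N) z = coeffPoly c m z + z ^ m * coeffPoly d N z := by
  rw [coeffPoly, sum_range_add, coeffPoly, coeffPoly, mul_sum]
  congr 1
  · exact sum_congr rfl fun n hn => by rw [hc n (mem_range.mp hn)]
  · exact sum_congr rfl fun n _ => by rw [hd, pow_add]; ring

theorem sum_Icc_mul_cos_eq_re (c : ℕ → ℝ) (N : ℕ) (t : ℝ) :
    ∑ n ∈ Icc 1 N, c (n - 1) * Real.cos (n * t)
      = (exp (t * I) * coeffPoly c N (exp (t * I))).re := by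
  rw [← Ico_add_one_right_eq_Icc, sum_Ico_eq_sum_range, Nat.add_sub_cancel, coeffPoly, mul_sum,
    re_sum]
  refine sum_congr rfl fun n _ => ?_
  have hexp : exp (t * I) * ((c n : ℂ) * exp (t * I) ^ n)
      = c n * exp (((1 + n : ℕ) * t : ℝ) * I) := by
    rw [← exp_nat_mul, ← mul_assoc, mul_comm (exp _), mul_assoc, ← exp_add]
    push_cast
    ring_nf
  rw [hexp, re_ofReal_mul, exp_ofReal_mul_I_re, Nat.add_sub_cancel_left]

/-- Coefficients of `(P_k, Q_k)`; only their values below `2^k` are used. -/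
noncomputable def rudinShapiroCoeffs : ℕ → (ℕ → ℝ) × (ℕ → ℝ)
  | 0 => (fun _ => 1, fun _ => 1)
  | k + 1 => (fun n => if n < 2 ^ k then (rudinShapiroCoeffs k).1 n
                else (rudinShapiroCoeffs k).2 (n - 2 ^ k),
              fun n => if n < 2 ^ k then (rudinShapiroCoeffs k).1 n
                else -(rudinShapiroCoeffs k).2 (n - 2 ^ k))

theorem rudinShapiroCoeffs_eq_one_or_neg_one (k n : ℕ) :
    ((rudinShapiroCoeffs k).1 n = 1 ∨ (rudinShapiroCoeffs k).1 n = -1) ∧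
      ((rudinShapiroCoeffs k).2 n = 1 ∨ (rudinShapiroCoeffs k).2 n = -1) := by
  induction k generalizing n with
  | zero => simp [rudinShapiroCoeffs]
  | succ k ih =>
    simp only [rudinShapiroCoeffs]
    by_cases h : n < 2 ^ k
    · simpa [h] using (ih n).1
    · rcases (ih (n - 2 ^ k)).2 with h2 | h2 <;> simp [h, h2]

noncomputable def rudinShapiroP (k : ℕ) (z : ℂ) : ℂ :=
  coeffPoly (rudinShapiroCoeffs k).1 (2 ^ k) z

noncomputable def rudinShapiroQ (k : ℕ) (z : ℂ) : ℂ :=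
  coeffPoly (rudinShapiroCoeffs k).2 (2 ^ k) z

theorem rudinShapiroP_succ (k : ℕ) (z : ℂ) :
    rudinShapiroP (k + 1) z = rudinShapiroP k z + z ^ 2 ^ k * rudinShapiroQ k z := by
  rw [rudinShapiroP, pow_succ, mul_two]
  exact coeffPoly_add_of_eq _ (fun n hn => if_pos hn) (fun n => by simp) z

theorem rudinShapiroQ_succ (k : ℕ) (z : ℂ) :
    rudinShapiroQ (k + 1) z = rudinShapiroP k z - z ^ 2 ^ k * rudinShapiroQ k z := by
  have hneg : coeffPoly (fun n => -(rudinShapiroCoeffs k).2 n) (2 ^ k) z = -rudinShapiroQ k z := by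
    simp [coeffPoly, rudinShapiroQ, sum_neg_distrib]
  rw [rudinShapiroQ, pow_succ, mul_two, sub_eq_add_neg, ← mul_neg, ← hneg]
  exact coeffPoly_add_of_eq _ (fun n hn => if_pos hn) (fun n => by simp) z

theorem norm_rudinShapiroP_sq_add_norm_rudinShapiroQ_sq (k : ℕ) {z : ℂ} (hz : ‖z‖ = 1) :
    ‖rudinShapiroP k z‖ ^ 2 + ‖rudinShapiroQ k z‖ ^ 2 = 2 ^ (k + 1) := by
  induction k with
  | zero => simp [rudinShapiroP, rudinShapiroQ, coeffPoly, rudinShapiroCoeffs]; norm_num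
  | succ k ih =>
    rw [rudinShapiroP_succ, rudinShapiroQ_succ, parallelogram_law_with_norm ℝ, norm_mul,
      norm_pow, hz, one_pow, one_mul, ih, pow_succ _ (k + 1)]
    ring

theorem norm_rudinShapiroP_le (k : ℕ) {z : ℂ} (hz : ‖z‖ = 1) :
    ‖rudinShapiroP k z‖ ≤ (2 : ℝ) ^ (((k : ℝ) + 1) / 2) := by
  have hsq : ‖rudinShapiroP k z‖ ^ 2 ≤ 2 ^ (k + 1) := by
    rw [← norm_rudinShapiroP_sq_add_norm_rudinShapiroQ_sq k hz]
    exact le_add_of_nonneg_right (sq_nonneg _)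
  calc ‖rudinShapiroP k z‖ ≤ Real.sqrt (2 ^ (k + 1)) := Real.le_sqrt_of_sq_le hsq
    _ = (2 : ℝ) ^ (((k : ℝ) + 1) / 2) := by
      rw [Real.sqrt_eq_rpow, ← Real.rpow_natCast, ← Real.rpow_mul zero_le_two]
      push_cast
      ring_nf

/-- Shapiro–Rudin polynomials: for each `k` there are signs `ε_n = ±1` such that
`|∑_{n=1}^{2^k} ε_n cos(nt)| ≤ 2^{(k+1)/2}` for all `t`. -/
theorem stmt10 (k : ℕ) :
    ∃ ε : ℕ → ℝ, (∀ n, ε n = 1 ∨ ε n = -1) ∧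
      ∀ t : ℝ, |∑ n ∈ Finset.Icc 1 (2 ^ k), ε n * Real.cos (n * t)|
        ≤ (2 : ℝ) ^ (((k : ℝ) + 1) / 2) := by
  refine ⟨fun n => (rudinShapiroCoeffs k).1 (n - 1),
    fun n => (rudinShapiroCoeffs_eq_one_or_neg_one k (n - 1)).1, fun t => ?_⟩
  have hz : ‖exp (t * I)‖ = 1 := norm_exp_ofReal_mul_I t
  rw [sum_Icc_mul_cos_eq_re]
  calc |(exp (t * I) * rudinShapiroP k (exp (t * I))).re|
      ≤ ‖exp (t * I) * rudinShapiroP k (exp (t * I))‖ := abs_re_le_norm _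
    _ = ‖rudinShapiroP k (exp (t * I))‖ := by rw [norm_mul, hz, one_mul]
    _ ≤ (2 : ℝ) ^ (((k : ℝ) + 1) / 2) := norm_rudinShapiroP_le k hz
end
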